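/- arXiv:2001.03098 — 3 statements merged into one kernel-verified Lean document; each statement's English description precedes it below -/
import Mathlib

section
/- If G is a connected simple graph in which every vertex has degree at least 3 and fen(G) ≥ 2, where fen(G) = |E(G)| - |V(G)| + 1 is the feedback edge number, then |V(G)| ≤ 2·fen(G) - 2 and |E(G)| ≤ 3·fen(G) - 3. -/
/-- a connected graph of minimum degree at least `3` whose feedback
edge number `fen = |E| - |V| + 1` is at least `2` satisfies
`|V| ≤ 2·fen - 2` and `|E| ≤ 3·fen - 3`. -/
theorem card_le_of_min_degree_three {V : Type*} [Fintype V] [DecidableEq V]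
    (G : SimpleGraph V) [DecidableRel G.Adj] (hG : G.Connected)
    (hdeg : ∀ v : V, 3 ≤ G.degree v)
    (fen : ℕ) (hfen : fen = G.edgeFinset.card + 1 - Fintype.card V)
    (h2 : 2 ≤ fen) :
    Fintype.card V ≤ 2 * fen - 2 ∧ G.edgeFinset.card ≤ 3 * fen - 3 := by
  have hsum : ∑ v, G.degree v = 2 * G.edgeFinset.card :=
    G.sum_degrees_eq_twice_card_edges
  have h3 : 3 * Fintype.card V ≤ 2 * G.edgeFinset.card := by
    calc 3 * Fintype.card V = ∑ _v : V, 3 := by simp [mul_comm]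
    _ ≤ ∑ v, G.degree v := Finset.sum_le_sum fun v _ => hdeg v
    _ = 2 * G.edgeFinset.card := hsum
  omega
end

section
/- Let G be a connected graph and u a vertex with unique neighbor v, where v has degree 2. Then G has a geodetic set of size at most k if and only if G - u has a geodetic set of size at most k. -/
/-- A set `S` is geodetic if every vertex lies on a shortest path between two
vertices of `S`. -/
def IsGeodeticSet {V : Type*} (G : SimpleGraph V) (S : Set V) : Prop :=
  ∀ w : V, ∃ u ∈ S, ∃ v ∈ S, G.dist u v = G.dist u w + G.dist w v

open SimpleGraph

section Aux

variable {W : Type*} {H : SimpleGraph W}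

lemma adj_of_leaf {u v : W} (hN : H.neighborSet u = {v}) : H.Adj u v := by
  have : v ∈ H.neighborSet u := by rw [hN]; rfl
  exact this

lemma eq_of_adj_leaf {u v x : W} (hN : H.neighborSet u = {v}) (h : H.Adj u x) : x = v := by
  have : x ∈ H.neighborSet u := h
  rwa [hN, Set.mem_singleton_iff] at this

lemma leaf_dist (hH : H.Connected) {u v x : W} (hN : H.neighborSet u = {v})
    (hx : x ≠ u) : H.dist u x = H.dist v x + 1 := by
  have hadj : H.Adj u v := adj_of_leaf hN
  apply le_antisymm
  · calc H.dist u x ≤ H.dist u v + H.dist v x := hH.dist_triangle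
      _ = H.dist v x + 1 := by
        rw [SimpleGraph.dist_eq_one_iff_adj.mpr hadj]; omega
  · obtain ⟨p, hp, hlen⟩ := hH.exists_path_of_dist u x
    cases p with
    | nil => exact absurd rfl hx
    | cons h q =>
      have hc := eq_of_adj_leaf hN h
      have : H.dist v x ≤ q.length := hc ▸ SimpleGraph.dist_le q
      simp only [Walk.length_cons] at hlen
      omega

lemma leaf_mem_geodetic (hH : H.Connected) {u v : W} (hN : H.neighborSet u = {v})
    {S : Set W} (hS : IsGeodeticSet H S) : u ∈ S := by
  obtain ⟨a, ha, b, hb, hab⟩ := hS u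
  by_contra hu
  have ha' : a ≠ u := fun h => hu (h ▸ ha)
  have hb' : b ≠ u := fun h => hu (h ▸ hb)
  rw [show H.dist a u = H.dist u a from SimpleGraph.dist_comm,
    leaf_dist hH hN ha', leaf_dist hH hN hb',
    show H.dist v a = H.dist a v from SimpleGraph.dist_comm] at hab
  have htri : H.dist a b ≤ H.dist a v + H.dist v b := hH.dist_triangle
  omega

lemma path_avoid_leaf {u v : W} (hN : H.neighborSet u = {v}) :
    ∀ {a b : W} (p : H.Walk a b), p.IsPath → a ≠ u → b ≠ u → u ∉ p.support := by
  intro a b p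
  induction p with
  | nil =>
    intro _ ha _
    simp only [Walk.support_nil, List.mem_singleton]
    exact fun h => ha h.symm
  | @cons a c b hadj q ih =>
    intro hp ha hb
    simp only [Walk.support_cons, List.mem_cons]
    rintro (rfl | hu)
    · exact ha rfl
    · by_cases hc : c = u
      · subst hc
        have hav : a = v := eq_of_adj_leaf hN hadj.symm
        cases q with
        | nil => exact hb rfl
        | cons h' q' =>
          have hdv : _ = v := eq_of_adj_leaf hN h'
          have hnd : a ∉ (Walk.cons h' q').support := ((Walk.cons_isPath_iff _ _).mp hp).2
          apply hnd
          simp [Walk.support_cons, hav, ← hdv, Walk.start_mem_support]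
      · exact (ih hp.of_cons hc hb) hu

lemma exists_lift_walk {s : Set W} :
    ∀ {a b : W} (p : H.Walk a b) (_ : ∀ x ∈ p.support, x ∈ s) (ha : a ∈ s) (hb : b ∈ s),
      ∃ q : (H.induce s).Walk ⟨a, ha⟩ ⟨b, hb⟩, q.length = p.length := by
  intro a b p
  induction p with
  | nil => exact fun _ _ _ => ⟨.nil, rfl⟩
  | @cons a c b hadj q ih =>
    intro h ha hb
    have hc : c ∈ s := h c (by simp)
    obtain ⟨q', hq'⟩ := ih (fun x hx => h x (by simp [hx])) hc hb
    exact ⟨.cons (by simpa using hadj) q', by simp [hq']⟩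

end Aux

section Induce

variable {V : Type*} {G : SimpleGraph V} {u v : V}

lemma reach_induce (hG : G.Connected) (hN : G.neighborSet u = {v})
    (a b : ({u}ᶜ : Set V)) :
    ∃ q : (G.induce ({u}ᶜ : Set V)).Walk a b, q.length = G.dist ↑a ↑b := by
  obtain ⟨p, hp, hlen⟩ := hG.exists_path_of_dist ↑a ↑b
  have ha : (a : V) ≠ u := Set.mem_compl_singleton_iff.mp a.2
  have hb : (b : V) ≠ u := Set.mem_compl_singleton_iff.mp b.2
  have hav : u ∉ p.support := path_avoid_leaf hN p hp ha hb
  obtain ⟨q, hq⟩ := exists_lift_walk p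
    (fun x hx => Set.mem_compl_singleton_iff.mpr (fun h : x = u => hav (h ▸ hx))) a.2 b.2
  exact ⟨q, by rw [hq, hlen]⟩

lemma dist_induce_eq (hG : G.Connected) (hN : G.neighborSet u = {v})
    (a b : ({u}ᶜ : Set V)) :
    (G.induce ({u}ᶜ : Set V)).dist a b = G.dist ↑a ↑b := by
  obtain ⟨q, hq⟩ := reach_induce hG hN a b
  apply le_antisymm
  · exact hq ▸ SimpleGraph.dist_le q
  · obtain ⟨p, hp, hlen⟩ := Reachable.exists_path_of_dist ⟨q⟩
    have := SimpleGraph.dist_le (p.map (SimpleGraph.Embedding.induce ({u}ᶜ : Set V)).toHom)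
    rwa [Walk.length_map, hlen] at this

lemma connected_induce (hG : G.Connected) (hN : G.neighborSet u = {v}) :
    (G.induce ({u}ᶜ : Set V)).Connected := by
  rw [connected_iff]
  refine ⟨fun a b => ⟨(reach_induce hG hN a b).choose⟩, ?_⟩
  have huv : G.Adj u v := adj_of_leaf hN
  exact ⟨⟨v, Set.mem_compl_singleton_iff.mpr huv.ne'⟩⟩

end Induce

/-- if `u` has unique neighbor `v` and `v` has degree two, then `G`
has a geodetic set of size at most `k` iff `G - u` does. -/
theorem geodetic_del_leaf_of_deg_two {V : Type*} [Fintype V] [DecidableEq V]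
    (G : SimpleGraph V) [DecidableRel G.Adj] (hG : G.Connected)
    (u v : V) (hN : G.neighborSet u = {v}) (hv : G.degree v = 2) (k : ℕ) :
    (∃ S : Set V, IsGeodeticSet G S ∧ S.ncard ≤ k) ↔
      (∃ S : Set ({u}ᶜ : Set V), IsGeodeticSet (G.induce ({u}ᶜ : Set V)) S ∧
        S.ncard ≤ k) := by
  have huv : G.Adj u v := adj_of_leaf hN
  have hvmem : v ∈ ({u}ᶜ : Set V) := Set.mem_compl_singleton_iff.mpr huv.ne'
  have hdist := dist_induce_eq hG hN
  have hd : ∀ x, x ≠ u → G.dist u x = G.dist v x + 1 := fun x hx => leaf_dist hG hN hx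
  have hd1 : G.dist u v = 1 := SimpleGraph.dist_eq_one_iff_adj.mpr huv
  -- the second neighbor of v
  have humem : u ∈ G.neighborFinset v := by simpa using huv.symm
  obtain ⟨a0, b0, hab0, hset0⟩ := Finset.card_eq_two.mp hv
  obtain ⟨w, hwu, hwset⟩ : ∃ w, w ≠ u ∧ G.neighborFinset v = {u, w} := by
    rw [hset0] at humem ⊢
    rcases Finset.mem_insert.mp humem with h | h
    · obtain rfl := h
      exact ⟨b0, Ne.symm hab0, rfl⟩
    · obtain rfl := Finset.mem_singleton.mp h
      exact ⟨a0, hab0, Finset.pair_comm _ _⟩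
  have hwadj : G.Adj v w := by
    have : w ∈ G.neighborFinset v := by rw [hwset]; simp
    simpa using this
  have hwmem : w ∈ ({u}ᶜ : Set V) := Set.mem_compl_singleton_iff.mpr hwu
  have hNv : (G.induce ({u}ᶜ : Set V)).neighborSet ⟨v, hvmem⟩
      = {(⟨w, hwmem⟩ : ({u}ᶜ : Set V))} := by
    ext x
    simp only [mem_neighborSet, Set.mem_singleton_iff]
    constructor
    · intro hadj
      have hx : (x : V) ∈ G.neighborFinset v := by
        simpa using (hadj : G.Adj v ↑x)
      rw [hwset] at hx
      rcases Finset.mem_insert.mp hx with h | h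
      · exact absurd h (Set.mem_compl_singleton_iff.mp x.2)
      · exact Subtype.ext (Finset.mem_singleton.mp h)
    · rintro rfl
      exact hwadj
  have hHconn := connected_induce hG hN (v := v)
  constructor
  · rintro ⟨S, hS, hcard⟩
    have huS : u ∈ S := leaf_mem_geodetic hG hN hS
    refine ⟨{x | ↑x ∈ insert v (S \ {u})}, ?_, ?_⟩
    · intro x
      have hxu : (x : V) ≠ u := Set.mem_compl_singleton_iff.mp x.2
      obtain ⟨a, ha, b, hb, hab⟩ := hS ↑x
      have h1 := hd ↑x hxu
      by_cases hau : a = u <;> by_cases hbu : b = u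
      · rw [hau, hbu, SimpleGraph.dist_self] at hab
        have h2 : G.dist ↑x u = G.dist u ↑x := SimpleGraph.dist_comm
        omega
      · rw [hau] at hab
        refine ⟨⟨v, hvmem⟩, Set.mem_insert _ _,
          ⟨b, Set.mem_compl_singleton_iff.mpr hbu⟩,
          Set.mem_insert_of_mem _ ⟨hb, hbu⟩, ?_⟩
        rw [hdist, hdist, hdist]
        show G.dist v b = G.dist v ↑x + G.dist ↑x b
        have h2 := hd b hbu
        omega
      · rw [hbu] at hab
        refine ⟨⟨a, Set.mem_compl_singleton_iff.mpr hau⟩,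
          Set.mem_insert_of_mem _ ⟨ha, hau⟩, ⟨v, hvmem⟩, Set.mem_insert _ _, ?_⟩
        rw [hdist, hdist, hdist]
        show G.dist a v = G.dist a ↑x + G.dist ↑x v
        have h2 := hd a hau
        have c1 : G.dist a u = G.dist u a := SimpleGraph.dist_comm
        have c2 : G.dist (↑x) u = G.dist u ↑x := SimpleGraph.dist_comm
        have c3 : G.dist a v = G.dist v a := SimpleGraph.dist_comm
        have c4 : G.dist (↑x) v = G.dist v ↑x := SimpleGraph.dist_comm
        omega
      · refine ⟨⟨a, Set.mem_compl_singleton_iff.mpr hau⟩,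
          Set.mem_insert_of_mem _ ⟨ha, hau⟩,
          ⟨b, Set.mem_compl_singleton_iff.mpr hbu⟩,
          Set.mem_insert_of_mem _ ⟨hb, hbu⟩, ?_⟩
        rw [hdist, hdist, hdist]
        show G.dist a b = G.dist a ↑x + G.dist ↑x b
        exact hab
    · have heq : Subtype.val '' {x : ({u}ᶜ : Set V) | ↑x ∈ insert v (S \ {u})}
          = insert v (S \ {u}) ∩ ({u}ᶜ : Set V) := by
        rw [show {x : ({u}ᶜ : Set V) | ↑x ∈ insert v (S \ {u})}
            = Subtype.val ⁻¹' (insert v (S \ {u})) from rfl,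
          Set.image_preimage_eq_inter_range, Subtype.range_val]
      have h1 : ({x : ({u}ᶜ : Set V) | ↑x ∈ insert v (S \ {u})}).ncard
          = (insert v (S \ {u}) ∩ ({u}ᶜ : Set V)).ncard := by
        rw [← heq, Set.ncard_image_of_injective _ Subtype.val_injective]
      have h2 : (insert v (S \ {u}) ∩ ({u}ᶜ : Set V)).ncard
          ≤ (insert v (S \ {u})).ncard :=
        Set.ncard_le_ncard Set.inter_subset_left (Set.toFinite _)
      have h3 : (insert v (S \ {u})).ncard ≤ (S \ {u}).ncard + 1 :=
        Set.ncard_insert_le _ _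
      have h4 : (S \ {u}).ncard + 1 = S.ncard :=
        Set.ncard_diff_singleton_add_one huS
      omega
  · rintro ⟨S', hS', hcard⟩
    have hvS' : (⟨v, hvmem⟩ : ({u}ᶜ : Set V)) ∈ S' := leaf_mem_geodetic hHconn hNv hS'
    obtain ⟨b2, hb2S, hb2v⟩ : ∃ b ∈ S', b ≠ (⟨v, hvmem⟩ : ({u}ᶜ : Set V)) := by
      obtain ⟨a1, ha1, b1, hb1, hab1⟩ := hS' ⟨w, hwmem⟩
      by_cases h1 : a1 = ⟨v, hvmem⟩
      · by_cases h2 : b1 = ⟨v, hvmem⟩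
        · exfalso
          rw [h1, h2, SimpleGraph.dist_self, hdist, hdist] at hab1
          have hab1' : (0 : ℕ) = G.dist v w + G.dist w v := hab1
          have : 0 < G.dist v w := hG.pos_dist_of_ne hwadj.ne
          have hc : G.dist w v = G.dist v w := SimpleGraph.dist_comm
          omega
        · exact ⟨b1, hb1, h2⟩
      · exact ⟨a1, ha1, h1⟩
    have hb2u : (↑b2 : V) ≠ u := Set.mem_compl_singleton_iff.mp b2.2
    refine ⟨insert u (Subtype.val '' (S' \ {⟨v, hvmem⟩})), ?_, ?_⟩
    · intro x
      by_cases hxu : x = u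
      · exact ⟨u, Set.mem_insert _ _, u, Set.mem_insert _ _, by
          rw [hxu]; simp [SimpleGraph.dist_self]⟩
      · by_cases hxv : x = v
        · refine ⟨u, Set.mem_insert _ _, ↑b2,
            Set.mem_insert_of_mem _ ⟨b2, ⟨hb2S, hb2v⟩, rfl⟩, ?_⟩
          rw [hxv, hd ↑b2 hb2u, hd1]
          omega
        · obtain ⟨a, haS, b, hbS, hab⟩ := hS' ⟨x, Set.mem_compl_singleton_iff.mpr hxu⟩
          rw [hdist, hdist, hdist] at hab
          have hab' : G.dist ↑a ↑b = G.dist ↑a x + G.dist x ↑b := hab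
          have hau' : (↑a : V) ≠ u := Set.mem_compl_singleton_iff.mp a.2
          have hbu' : (↑b : V) ≠ u := Set.mem_compl_singleton_iff.mp b.2
          by_cases hav : a = ⟨v, hvmem⟩ <;> by_cases hbv : b = ⟨v, hvmem⟩
          · exfalso
            have hav' : (↑a : V) = v := by rw [hav]
            have hbv' : (↑b : V) = v := by rw [hbv]
            rw [hav', hbv', SimpleGraph.dist_self] at hab'
            have : 0 < G.dist v x := hG.pos_dist_of_ne (Ne.symm hxv)
            have hc : G.dist x v = G.dist v x := SimpleGraph.dist_comm
            omega
          · have hav' : (↑a : V) = v := by rw [hav]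
            rw [hav'] at hab'
            refine ⟨u, Set.mem_insert _ _, ↑b,
              Set.mem_insert_of_mem _ ⟨b, ⟨hbS, hbv⟩, rfl⟩, ?_⟩
            rw [hd ↑b hbu', hd x hxu]
            omega
          · have hbv' : (↑b : V) = v := by rw [hbv]
            rw [hbv'] at hab'
            refine ⟨↑a, Set.mem_insert_of_mem _ ⟨a, ⟨haS, hav⟩, rfl⟩,
              u, Set.mem_insert _ _, ?_⟩
            have c1 : G.dist (↑a) u = G.dist u ↑a := SimpleGraph.dist_comm
            have c2 : G.dist x u = G.dist u x := SimpleGraph.dist_comm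
            have c3 : G.dist (↑a) v = G.dist v ↑a := SimpleGraph.dist_comm
            have c4 : G.dist x v = G.dist v x := SimpleGraph.dist_comm
            have h2 := hd ↑a hau'
            have h3 := hd x hxu
            omega
          · exact ⟨↑a, Set.mem_insert_of_mem _ ⟨a, ⟨haS, hav⟩, rfl⟩,
              ↑b, Set.mem_insert_of_mem _ ⟨b, ⟨hbS, hbv⟩, rfl⟩, hab'⟩
    · have h1 : (insert u (Subtype.val '' (S' \ {⟨v, hvmem⟩}))).ncard
          ≤ (Subtype.val '' (S' \ {⟨v, hvmem⟩})).ncard + 1 := Set.ncard_insert_le _ _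
      have h2 : (Subtype.val '' (S' \ {⟨v, hvmem⟩})).ncard
          = (S' \ {⟨v, hvmem⟩}).ncard := Set.ncard_image_of_injective _ Subtype.val_injective
      have h3 : (S' \ {⟨v, hvmem⟩}).ncard + 1 = S'.ncard :=
        Set.ncard_diff_singleton_add_one hvS'
      omega
end

section
/- Let P = (v_0, v_1, ..., v_h) be an induced path in a connected graph G such that all internal vertices v_1,...,v_{h-1} have degree 2 in G, and let 0 ≤ l < l' ≤ h with d_G(v_l, v_{l'}) < l' - l. Then every geodetic set of G contains at least one of the vertices v_{l+1}, ..., v_{l'-1}. -/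
/-- if `(v 0, …, v h)` is an induced path whose internal vertices
have degree two in `G`, and `d(v l, v l') < l' - l`, then every geodetic set of
`G` contains some internal vertex `v j` with `l < j < l'`. -/
theorem geodetic_meets_interior {V : Type*} [Fintype V] [DecidableEq V]
    (G : SimpleGraph V) [DecidableRel G.Adj] (hG : G.Connected)
    (h : ℕ) (v : ℕ → V)
    (hinj : ∀ i j, i ≤ h → j ≤ h → v i = v j → i = j)
    (hadj : ∀ i j, i ≤ h → j ≤ h → (G.Adj (v i) (v j) ↔ (j = i + 1 ∨ i = j + 1)))
    (hdeg : ∀ i, 0 < i → i < h → G.degree (v i) = 2)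
    (l l' : ℕ) (hll' : l < l') (hl'h : l' ≤ h)
    (hdist : G.dist (v l) (v l') < l' - l)
    (S : Set V) (hS : IsGeodeticSet G S) :
    ∃ j, l < j ∧ j < l' ∧ v j ∈ S := by
  by_contra hcon
  push_neg at hcon
  -- Key claim: for `u` avoiding the interior vertices, and `l ≤ m ≤ l'`,
  -- `d(u, v m) ≥ min (d(u, v l) + (m - l)) (d(u, v l') + (l' - m))`.
  have key : ∀ n : ℕ, ∀ u : V, (∀ j, l < j → j < l' → u ≠ v j) →
      ∀ m, l ≤ m → m ≤ l' → G.dist u (v m) = n →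
      (G.dist u (v l) + (m - l) ≤ n ∨ G.dist u (v l') + (l' - m) ≤ n) := by
    intro n
    induction n using Nat.strong_induction_on with
    | _ n IH =>
      intro u hu m hlm hml' hdm
      rcases eq_or_lt_of_le hlm with hml | hml
      · left; rw [← hml] at hdm; omega
      rcases eq_or_lt_of_le hml' with hml2 | hml2
      · right; rw [hml2] at hdm; omega
      -- now l < m < l'
      have hmh : m < h := lt_of_lt_of_le hml2 hl'h
      have hm0 : 0 < m := Nat.lt_of_le_of_lt (Nat.zero_le l) hml
      have hum : u ≠ v m := hu m hml hml2
      have hn0 : 0 < n := by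
        rw [← hdm]
        exact hG.pos_dist_of_ne hum
      -- neighbors of `v m` are exactly `v (m-1)` and `v (m+1)`
      have hadj1 : G.Adj (v m) (v (m - 1)) := by
        rw [hadj m (m - 1) (le_of_lt hmh) (by omega)]; omega
      have hadj2 : G.Adj (v m) (v (m + 1)) := by
        rw [hadj m (m + 1) (le_of_lt hmh) (by omega)]; omega
      have hne12 : v (m - 1) ≠ v (m + 1) := fun he => by
        have := hinj (m - 1) (m + 1) (by omega) (by omega) he; omega
      have hNeq : G.neighborFinset (v m) = {v (m - 1), v (m + 1)} := by
        symm
        apply Finset.eq_of_subset_of_card_le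
        · intro y hy
          simp only [Finset.mem_insert, Finset.mem_singleton] at hy
          rcases hy with rfl | rfl
          · exact (G.mem_neighborFinset _ _).mpr hadj1
          · exact (G.mem_neighborFinset _ _).mpr hadj2
        · rw [SimpleGraph.card_neighborFinset_eq_degree, hdeg m hm0 hmh]
          rw [Finset.card_insert_of_notMem (by simpa using hne12)]
          simp
      -- take a shortest walk from `v m` to `u` and look at its first step
      obtain ⟨p, hp⟩ := hG.exists_walk_length_eq_dist (v m) u
      rw [SimpleGraph.dist_comm, hdm] at hp
      cases p with
      | nil => exact absurd rfl hum.symm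
      | cons ha q =>
        rename_i y
        have hyN : y ∈ G.neighborFinset (v m) := (G.mem_neighborFinset _ _).mpr ha
        rw [hNeq] at hyN
        simp only [Finset.mem_insert, Finset.mem_singleton] at hyN
        have hql : q.length = n - 1 := by
          simp only [SimpleGraph.Walk.length_cons] at hp; omega
        have hduy : G.dist u y ≤ n - 1 := by
          have := SimpleGraph.dist_le q.reverse
          rwa [SimpleGraph.Walk.length_reverse, hql] at this
        rcases hyN with rfl | rfl
        · -- y = v (m - 1)
          have := IH (G.dist u (v (m - 1))) (by omega) u hu (m - 1) (by omega)
            (by omega) rfl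
          rcases this with h1 | h1
          · left; omega
          · right; omega
        · -- y = v (m + 1)
          have := IH (G.dist u (v (m + 1))) (by omega) u hu (m + 1) (by omega)
            (by omega) rfl
          rcases this with h1 | h1
          · left; omega
          · right; omega
  -- apply the geodetic property at the interior vertex `v (l + 1)`
  obtain ⟨u, huS, x, hxS, hux⟩ := hS (v (l + 1))
  have hu' : ∀ j, l < j → j < l' → u ≠ v j := fun j h1 h2 he =>
    hcon j h1 h2 (he ▸ huS)
  have hx' : ∀ j, l < j → j < l' → x ≠ v j := fun j h1 h2 he =>
    hcon j h1 h2 (he ▸ hxS)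
  have ku := key (G.dist u (v (l + 1))) u hu' (l + 1) (by omega) (by omega) rfl
  have kx := key (G.dist x (v (l + 1))) x hx' (l + 1) (by omega) (by omega) rfl
  have hcomm : G.dist (v (l + 1)) x = G.dist x (v (l + 1)) := SimpleGraph.dist_comm
  have t1 : G.dist u x ≤ G.dist u (v l) + G.dist (v l) x :=
    hG.dist_triangle (v := v l)
  have t2 : G.dist u x ≤ G.dist u (v l') + G.dist (v l') x :=
    hG.dist_triangle (v := v l')
  have t3 : G.dist u x ≤ G.dist u (v l) + G.dist (v l) (v l') + G.dist (v l') x :=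
    le_trans (hG.dist_triangle (v := v l')) (by
      have : G.dist u (v l') ≤ G.dist u (v l) + G.dist (v l) (v l') :=
        hG.dist_triangle (v := v l)
      omega)
  have t4 : G.dist u x ≤ G.dist u (v l') + G.dist (v l') (v l) + G.dist (v l) x :=
    le_trans (hG.dist_triangle (v := v l)) (by
      have : G.dist u (v l) ≤ G.dist u (v l') + G.dist (v l') (v l) :=
        hG.dist_triangle (v := v l')
      omega)
  have c1 : G.dist (v l) x = G.dist x (v l) := SimpleGraph.dist_comm
  have c2 : G.dist (v l') x = G.dist x (v l') := SimpleGraph.dist_comm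
  have c3 : G.dist (v l') (v l) = G.dist (v l) (v l') := SimpleGraph.dist_comm
  have hnell' : v l ≠ v l' := fun he => by
    have := hinj l l' (by omega) hl'h he; omega
  have hpos : 0 < G.dist (v l) (v l') := hG.pos_dist_of_ne hnell'
  omega
end
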